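/- arXiv:2502.19170 — 3 statements merged into one kernel-verified Lean document; each statement's English description precedes it below -/
import Mathlib

section
/- For all real S > 0, if S > 2/√3 then (2/9)·(1/S²) ≤ 1/2 − S/(2·√(4+S²)). -/
/-!
With `r = √(4 + S²)` we have `r² - S² = 4`, so `1/2 - S/(2r) = (r - S)/(2r) = 2/(r(r + S))`.
The hypothesis says `3S² > 4`, hence `r² < 4S²`, i.e. `r < 2S`, and so `r(r + S) < 6S² ≤ 9S²`.
-/

open Real

lemma one_half_sub_div_two_sqrt_add_sq {c : ℝ} (hc : 0 < c) (x : ℝ) :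
    1 / 2 - x / (2 * √(c + x ^ 2)) = c / (2 * √(c + x ^ 2) * (√(c + x ^ 2) + x)) := by
  set r := √(c + x ^ 2)
  have hr2 : r ^ 2 = c + x ^ 2 := sq_sqrt (by positivity)
  have hr : 0 < r := sqrt_pos.mpr (by positivity)
  have hxr : |x| < r := by
    rw [lt_sqrt (abs_nonneg x), sq_abs]
    linarith
  have hrx : 0 < r + x := by linarith [neg_abs_le x]
  field_simp
  linear_combination hr2

lemma sqrt_add_sq_lt_two_mul {c x : ℝ} (hx : 0 < x) (hcx : c < 3 * x ^ 2) :
    √(c + x ^ 2) < 2 * x := by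
  rw [sqrt_lt' (by positivity)]
  linarith

lemma four_lt_three_mul_sq_of_two_div_sqrt_three_lt {S : ℝ} (h : 2 / √3 < S) :
    4 < 3 * S ^ 2 := by
  have h3 : (2 / √3) ^ 2 < S ^ 2 := pow_lt_pow_left₀ h (by positivity) two_ne_zero
  rw [div_pow, sq_sqrt zero_le_three, div_lt_iff₀ zero_lt_three] at h3
  linarith

theorem high_snr_branch_dominated (S : ℝ) (hS : 0 < S) (h : S > 2 / Real.sqrt 3) :
    (2 / 9) * (1 / S ^ 2) ≤ 1 / 2 - S / (2 * Real.sqrt (4 + S ^ 2)) := by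
  rw [one_half_sub_div_two_sqrt_add_sq four_pos]
  have hr : √(4 + S ^ 2) < 2 * S :=
    sqrt_add_sq_lt_two_mul hS (four_lt_three_mul_sq_of_two_div_sqrt_three_lt h)
  have hr0 : 0 < √(4 + S ^ 2) := sqrt_pos.mpr (by positivity)
  have hprod : 2 * √(4 + S ^ 2) * (√(4 + S ^ 2) + S) ≤ 18 * S ^ 2 := by nlinarith
  calc 2 / 9 * (1 / S ^ 2) = 4 / (18 * S ^ 2) := by field_simp; ring
    _ ≤ 4 / (2 * √(4 + S ^ 2) * (√(4 + S ^ 2) + S)) :=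
      div_le_div_of_nonneg_left zero_le_four (by positivity) hprod
end

section
/- Let Q be a positive integer, α ∈ [0,1), p ∈ (1/2,1] with α < 1 − 1/(2p), and let Z be a Binomial((1−α)Q, p) random variable (with (1−α)Q an integer). Then P(Z < Q/2) ≤ (1/(2√Q)) · √((1−α)p(1−p)) / ((1−α)p − 1/2). -/
/-!
Cantelli's one-sided inequality: if `u ≥ 0` then `X ≤ E[X] - t` forces
`(X - E[X] - u)² ≥ (t + u)²`, so Markov's inequality bounds the probability by
`(Var X + u²) / (t + u)²`, which for `u = Var X / t` is `Var X / (Var X + t²)`.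
Apply it to `Z ~ Bin(n, p)` with `n = (1 - α)Q`, `E[Z] = np`, `Var Z = σ² = np(1 - p)` and
`t = np - Q/2 = Q((1 - α)p - 1/2)`, and finish with `σ² / (σ² + t²) ≤ σ / (2t)`,
which is `σ² + t² ≥ 2σt`.
-/

open MeasureTheory ProbabilityTheory
open scoped NNReal

set_option linter.deprecated false

theorem measureReal_le_integral_sub_le_variance_div {Ω : Type*} {mΩ : MeasurableSpace Ω}
    {μ : Measure Ω} [IsProbabilityMeasure μ] {X : Ω → ℝ} (hX : MemLp X 2 μ) {t : ℝ}
    (ht : 0 < t) :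
    μ.real {ω | X ω ≤ μ[X] - t} ≤ Var[X; μ] / (Var[X; μ] + t ^ 2) := by
  set v := Var[X; μ]
  set u := v / t
  have hu : 0 ≤ u := div_nonneg (variance_nonneg X μ) ht.le
  set Z : Ω → ℝ := fun ω => X ω - (μ[X] + u)
  have hZ : MemLp Z 2 μ := hX.sub (memLp_const _)
  have hmoment : ∫ ω, Z ω ^ 2 ∂μ = v + u ^ 2 := by
    have hvar : Var[Z; μ] = v := variance_sub_const hX.1 _
    have hmean : μ[Z] = -u := by
      simp [Z, integral_sub (hX.integrable one_le_two) (integrable_const _)]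
    have := variance_eq_sub hZ
    simp only [Pi.pow_apply, hvar, hmean] at this
    linarith
  have hsub : {ω | X ω ≤ μ[X] - t} ⊆ {ω | (t + u) ^ 2 ≤ Z ω ^ 2} := fun ω hω => by
    simp only [Set.mem_ofPred_eq, Z] at hω ⊢
    nlinarith
  have hmarkov := mul_meas_ge_le_integral_of_nonneg
    (Filter.Eventually.of_forall fun ω => sq_nonneg (Z ω)) hZ.integrable_sq ((t + u) ^ 2)
  calc μ.real {ω | X ω ≤ μ[X] - t}
      ≤ μ.real {ω | (t + u) ^ 2 ≤ Z ω ^ 2} := measureReal_mono hsub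
    _ ≤ (v + u ^ 2) / (t + u) ^ 2 := by
      rw [le_div_iff₀ (by positivity), mul_comm, ← hmoment]
      exact hmarkov
    _ = v / (v + t ^ 2) := by
      simp only [u]
      field_simp
      ring

theorem div_add_sq_le_sqrt_div_two_mul {v t : ℝ} (hv : 0 ≤ v) (ht : 0 < t) :
    v / (v + t ^ 2) ≤ √v / (2 * t) := by
  have hv_sq : v = √v ^ 2 := (Real.sq_sqrt hv).symm
  rw [hv_sq, Real.sqrt_sq (Real.sqrt_nonneg v), div_le_div_iff₀ (by positivity) (by positivity)]
  nlinarith [mul_nonneg (Real.sqrt_nonneg v) (sq_nonneg (√v - t))]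

namespace PMF

open Polynomial

variable {q : ℝ≥0} (hq : q ≤ 1) (n : ℕ)

theorem toReal_binomial_apply (i : Fin (n + 1)) :
    (binomial q hq n i).toReal = (bernsteinPolynomial ℝ n i).eval (q : ℝ) := by
  have h1q : ((1 - q : ℝ≥0) : ℝ) = 1 - q := NNReal.coe_sub hq
  rw [binomial_apply, Fin.val_last, ← ENNReal.coe_one, ← ENNReal.coe_sub]
  simp only [bernsteinPolynomial, ENNReal.toReal_mul, ENNReal.toReal_pow, ENNReal.coe_toReal,
    ENNReal.toReal_natCast, h1q, eval_mul, eval_pow, eval_natCast, eval_X, eval_sub, eval_one]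
  ring

theorem integral_binomial_eq_sum (f : Fin (n + 1) → ℝ) :
    ∫ k, f k ∂(binomial q hq n).toMeasure =
      ∑ k : Fin (n + 1), (bernsteinPolynomial ℝ n k).eval (q : ℝ) * f k := by
  simp only [integral_eq_sum, toReal_binomial_apply, smul_eq_mul]

theorem integral_binomial_val :
    ∫ k, ((k : ℕ) : ℝ) ∂(binomial q hq n).toMeasure = n * q := by
  have := congrArg (eval (q : ℝ)) (bernsteinPolynomial.sum_smul ℝ n)
  rw [Finset.sum_range] at this
  simpa [integral_binomial_eq_sum, eval_finset_sum, mul_comm] using this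

theorem variance_binomial_val :
    Var[fun k : Fin (n + 1) => ((k : ℕ) : ℝ); (binomial q hq n).toMeasure] =
      n * q * (1 - q) := by
  have := congrArg (eval (q : ℝ)) (bernsteinPolynomial.variance ℝ n)
  rw [Finset.sum_range] at this
  rw [variance_eq_integral (by fun_prop), integral_binomial_val, integral_binomial_eq_sum]
  convert this using 1
  · simp only [eval_finset_sum, eval_mul, eval_pow, eval_sub, eval_X, eval_natCast, nsmul_eq_mul]
    exact Finset.sum_congr rfl fun k _ => by ring
  · simp only [eval_mul, eval_X, eval_sub, eval_one, eval_natCast, nsmul_eq_mul]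

end PMF

theorem binomial_vote_failure_bound (Q : ℕ) (hQ : 0 < Q) (α p : ℝ)
    (hp : 1 / 2 < p) (hp1 : p ≤ 1)
    (hthr : α < 1 - 1 / (2 * p))
    (n : ℕ) (hn : (n : ℝ) = (1 - α) * Q) :
    (((PMF.binomial (Real.toNNReal p) (by simpa using hp1) n).toMeasure
        {k | (k : ℝ) < Q / 2}).toReal ≤
      (1 / (2 * Real.sqrt Q)) * Real.sqrt ((1 - α) * p * (1 - p)) / ((1 - α) * p - 1 / 2)) := by
  set μ := (PMF.binomial (Real.toNNReal p) (by simpa using hp1) n).toMeasure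
  have hp0 : 0 < p := by linarith
  have hQ0 : (0 : ℝ) < Q := Nat.cast_pos.mpr hQ
  have hcoe : (p.toNNReal : ℝ) = p := Real.coe_toNNReal p hp0.le
  have hmean : ∫ k, ((k : ℕ) : ℝ) ∂μ = Q * ((1 - α) * p) := by
    rw [PMF.integral_binomial_val, hcoe, hn]; ring
  have hvar : Var[fun k : Fin (n + 1) => ((k : ℕ) : ℝ); μ] = Q * ((1 - α) * p * (1 - p)) := by
    rw [PMF.variance_binomial_val, hcoe, hn]; ring
  have hd : 0 < (1 - α) * p - 1 / 2 := by
    have := (div_lt_iff₀ (by positivity)).mp (lt_sub_comm.mp hthr)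
    linarith
  set t := Q * ((1 - α) * p - 1 / 2)
  have ht : 0 < t := mul_pos hQ0 hd
  have hsub : {k : Fin (n + 1) | (k : ℝ) < Q / 2} ⊆
      {k | (k : ℝ) ≤ ∫ k, ((k : ℕ) : ℝ) ∂μ - t} :=
    fun k hk => by simp only [Set.mem_ofPred_eq, hmean, t] at hk ⊢; linarith
  calc μ.real {k | (k : ℝ) < Q / 2}
      ≤ μ.real {k | (k : ℝ) ≤ ∫ k, ((k : ℕ) : ℝ) ∂μ - t} := measureReal_mono hsub
    _ ≤ _ := measureReal_le_integral_sub_le_variance_div MemLp.of_discrete ht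
    _ ≤ _ := div_add_sq_le_sqrt_div_two_mul (variance_nonneg _ _) ht
    _ = _ := by
      have hsQ : 0 < √(Q : ℝ) := Real.sqrt_pos.mpr hQ0
      rw [hvar, Real.sqrt_mul hQ0.le]
      simp only [t]
      field_simp
      rw [Real.sq_sqrt hQ0.le]
      ring
end

section
/- Let p ∈ (1/2, 1] and α ∈ [0, 1 − 1/(2p)). For Z ~ Binomial(n, p) with n = (1−α)Q honest workers out of Q total, the probability that the majority vote fails, P(Z < Q/2), tends to 0 as Q → ∞ at rate O(1/√Q); specifically P(Z < Q/2) ≤ C(α,p)/√Q with C(α,p) = √((1−α)p(1−p))/(2((1−α)p − 1/2)). -/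
/-!
Cantelli's one-sided Chebyshev inequality bounds `P(Z ≤ E Z - t)` by `V / (V + t²)`, where the
mean `E Z = n p` and variance `V = n p (1 - p)` of the binomial law are read off from the
Bernstein polynomial identities. With `t = n p - Q / 2 = ((1 - α) p - 1 / 2) Q` of order `Q`,
the AM-GM inequality `V + t² ≥ 2 t √V` turns this into `√V / (2 t)`, which is exactly
`C(α, p) / √Q`.
-/

set_option linter.deprecated false

open Finset NNReal MeasureTheory Polynomial

theorem Finset.sum_filter_le_sub_le_div_add_sq {ι : Type*} (s : Finset ι) (w x : ι → ℝ)
    {m V t : ℝ} (hw : ∀ i ∈ s, 0 ≤ w i) (hw1 : ∑ i ∈ s, w i = 1)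
    (hm : ∑ i ∈ s, w i * x i = m) (hV : ∑ i ∈ s, w i * (x i - m) ^ 2 = V) (ht : 0 < t) :
    ∑ i ∈ s with x i ≤ m - t, w i ≤ V / (V + t ^ 2) := by
  have hV0 : 0 ≤ V := hV ▸ sum_nonneg fun i hi => mul_nonneg (hw i hi) (sq_nonneg _)
  -- Markov's inequality for `(m - x + u) ^ 2`, with the optimal shift `u = V / t`.
  set u := V / t with hu
  have hu0 : 0 ≤ u := div_nonneg hV0 ht.le
  have hshift : ∑ i ∈ s, w i * (m - x i + u) ^ 2 = V + u ^ 2 := by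
    have hcentered : ∑ i ∈ s, w i * (x i - m) = 0 := by
      simp only [mul_sub, sum_sub_distrib, hm, ← sum_mul, hw1, one_mul, sub_self]
    calc ∑ i ∈ s, w i * (m - x i + u) ^ 2
        = ∑ i ∈ s, w i * (x i - m) ^ 2 - 2 * u * ∑ i ∈ s, w i * (x i - m)
          + u ^ 2 * ∑ i ∈ s, w i := by
          simp only [mul_sum, ← sum_sub_distrib, ← sum_add_distrib]
          exact sum_congr rfl fun i _ => by ring
      _ = V + u ^ 2 := by rw [hV, hcentered, hw1]; ring
  calc ∑ i ∈ s with x i ≤ m - t, w i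
      ≤ ∑ i ∈ s with x i ≤ m - t, w i * (m - x i + u) ^ 2 / (t + u) ^ 2 := by
        refine sum_le_sum fun i hi => ?_
        obtain ⟨hi, hxi⟩ := mem_filter.1 hi
        rw [le_div_iff₀ (by positivity)]
        exact mul_le_mul_of_nonneg_left (pow_le_pow_left₀ (by positivity) (by linarith) 2)
          (hw i hi)
    _ ≤ ∑ i ∈ s, w i * (m - x i + u) ^ 2 / (t + u) ^ 2 :=
        sum_le_sum_of_subset_of_nonneg (filter_subset _ _) fun i hi _ =>
          div_nonneg (mul_nonneg (hw i hi) (sq_nonneg _)) (sq_nonneg _)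
    _ = V / (V + t ^ 2) := by
        rw [← sum_div, hshift, hu]
        field_simp
        ring

theorem div_add_sq_le_sqrt_div {V t : ℝ} (hV : 0 ≤ V) (ht : 0 < t) :
    V / (V + t ^ 2) ≤ √V / (2 * t) := by
  obtain ⟨s, hs, rfl⟩ : ∃ s, 0 ≤ s ∧ V = s ^ 2 :=
    ⟨√V, Real.sqrt_nonneg V, (Real.sq_sqrt hV).symm⟩
  rw [Real.sqrt_sq hs, div_le_div_iff₀ (by positivity) (by positivity)]
  nlinarith [mul_nonneg hs (sq_nonneg (s - t))]

theorem PMF.toMeasure_real_setOf {α : Type*} [Fintype α] [MeasurableSpace α]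
    [MeasurableSingletonClass α] (p : PMF α) (P : α → Prop) [DecidablePred P] :
    p.toMeasure.real {a | P a} = ∑ a with P a, (p a).toReal := by
  rw [measureReal_def, PMF.toMeasure_apply_fintype, ENNReal.toReal_sum fun a _ =>
    ((Set.indicator_le_self _ _ a).trans_lt (PMF.apply_lt_top _ _)).ne, sum_filter]
  refine sum_congr rfl fun a _ => ?_
  by_cases ha : P a <;> simp [ha]

theorem PMF.binomial_toReal_apply (p : ℝ≥0) (h : p ≤ 1) (n : ℕ) (k : Fin (n + 1)) :
    (PMF.binomial p h n k).toReal = (bernsteinPolynomial ℝ n k).eval (p : ℝ) := by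
  simp [PMF.binomial_apply, bernsteinPolynomial,
    ENNReal.toReal_sub_of_le (ENNReal.coe_le_one_iff.2 h) ENNReal.one_ne_top]
  ring

namespace bernsteinPolynomial

variable (n : ℕ) (x : ℝ)

theorem sum_fin_eval : ∑ k : Fin (n + 1), (bernsteinPolynomial ℝ n k).eval x = 1 := by
  have := congrArg (eval x) (bernsteinPolynomial.sum ℝ n)
  rwa [eval_finset_sum, eval_one, ← Fin.sum_univ_eq_sum_range] at this

theorem sum_fin_eval_mul :
    ∑ k : Fin (n + 1), (bernsteinPolynomial ℝ n k).eval x * k = n * x := by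
  have := congrArg (eval x) (sum_smul ℝ n)
  rw [eval_finset_sum,
    ← Fin.sum_univ_eq_sum_range fun k => eval x (k • bernsteinPolynomial ℝ n k)] at this
  simpa [mul_comm] using this

theorem sum_fin_eval_mul_sub_sq :
    ∑ k : Fin (n + 1), (bernsteinPolynomial ℝ n k).eval x * (k - n * x) ^ 2 =
      n * x * (1 - x) := by
  have := congrArg (eval x) (variance ℝ n)
  rw [eval_finset_sum, ← Fin.sum_univ_eq_sum_range fun k =>
    eval x ((n • X - (k : ℝ[X])) ^ 2 * bernsteinPolynomial ℝ n k)] at this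
  simp only [eval_mul, eval_pow, eval_sub, eval_X, eval_one, eval_natCast, nsmul_eq_mul] at this
  rw [← this]
  exact sum_congr rfl fun k _ => by ring

end bernsteinPolynomial

theorem PMF.binomial_toMeasure_real_le_sub_le (p : ℝ≥0) (h : p ≤ 1) (n : ℕ) {t : ℝ}
    (ht : 0 < t) :
    (PMF.binomial p h n).toMeasure.real {k | (k : ℝ) ≤ n * p - t} ≤
      n * p * (1 - p) / (n * p * (1 - p) + t ^ 2) := by
  rw [PMF.toMeasure_real_setOf]
  simp only [PMF.binomial_toReal_apply p h]
  refine sum_filter_le_sub_le_div_add_sq univ _ _ (fun k _ => ?_)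
    (bernsteinPolynomial.sum_fin_eval n p)
    (by simpa only [mul_comm] using bernsteinPolynomial.sum_fin_eval_mul n p)
    (bernsteinPolynomial.sum_fin_eval_mul_sub_sq n p) ht
  rw [← PMF.binomial_toReal_apply p h]
  exact ENNReal.toReal_nonneg

theorem vote_failure_decay_rate (p α : ℝ) (hp : 1 / 2 < p) (hp1 : p ≤ 1)
    (hα1 : α < 1 - 1 / (2 * p)) :
    ∀ Q : ℕ, 0 < Q → ∀ n : ℕ, (n : ℝ) = (1 - α) * Q →
      (((PMF.binomial (Real.toNNReal p) (by simpa using Real.toNNReal_le_one.mpr hp1) n).toMeasure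
          {k | (k : ℝ) < Q / 2}).toReal ≤
        (Real.sqrt ((1 - α) * p * (1 - p)) / (2 * ((1 - α) * p - 1 / 2))) / Real.sqrt Q) := by
  intro Q hQ n hn
  have hpq : (p.toNNReal : ℝ) = p := Real.coe_toNNReal p (by linarith)
  have hd : 0 < (1 - α) * p - 1 / 2 := by
    have := mul_lt_mul_of_pos_right hα1 (by linarith : 0 < 2 * p)
    field_simp at this
    linarith
  have hV0 : 0 ≤ (1 - α) * p * (1 - p) := by nlinarith
  have hQ0 : (0 : ℝ) < Q := Nat.cast_pos.2 hQ
  have ht : n * p - Q / 2 = ((1 - α) * p - 1 / 2) * Q := by rw [hn]; ring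
  have hV : n * p * (1 - p) = (1 - α) * p * (1 - p) * Q := by rw [hn]; ring
  set μ := (PMF.binomial p.toNNReal _ n).toMeasure
  calc μ.real {k | (k : ℝ) < Q / 2}
      ≤ μ.real {k | (k : ℝ) ≤ n * p.toNNReal - (n * p - Q / 2)} :=
        measureReal_mono fun k hk => by
          simp only [Set.mem_setOf_eq, hpq] at hk ⊢
          linarith
    _ ≤ n * p.toNNReal * (1 - p.toNNReal) /
          (n * p.toNNReal * (1 - p.toNNReal) + (n * p - Q / 2) ^ 2) :=
        PMF.binomial_toMeasure_real_le_sub_le _ _ n (by rw [ht]; positivity)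
    _ ≤ √(n * p * (1 - p)) / (2 * (n * p - Q / 2)) := by
        rw [hpq]
        exact div_add_sq_le_sqrt_div (by rw [hV]; positivity) (by rw [ht]; positivity)
    _ = √((1 - α) * p * (1 - p)) / (2 * ((1 - α) * p - 1 / 2)) / √Q := by
        have hsQ : 0 < √(Q : ℝ) := Real.sqrt_pos.2 hQ0
        rw [hV, ht, Real.sqrt_mul hV0]
        field_simp
        rw [Real.sq_sqrt hQ0.le]
end
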